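/- The map f(b) = |b| β̂ / (λ/n + |b|) on ℝ has exactly the fixed points 0 and ST(β̂, λ/n) (which may coincide when n|β̂| ≤ λ). -/

import Mathlib

/-!
Clearing the denominator, a nonzero fixed point `b` of `b ↦ |b| β̂ / (c + |b|)` is exactly a
solution of `β̂ = b + c · sign b`; for `c ≥ 0` this map `b ↦ b + c · sign b` on `b ≠ 0` is
inverted by soft thresholding at level `c`, which returns `0` on the gap `|β̂| ≤ c`.
-/

noncomputable def softThreshold (a c : ℝ) : ℝ := if c < |a| then a - c * Real.sign a else 0

lemma softThreshold_of_lt {a c : ℝ} (hc : 0 ≤ c) (h : c < a) : softThreshold a c = a - c := by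
  rw [softThreshold, if_pos (h.trans_le (le_abs_self a)), Real.sign_of_pos (hc.trans_lt h), mul_one]

lemma softThreshold_of_lt_neg {a c : ℝ} (hc : 0 ≤ c) (h : a < -c) : softThreshold a c = a + c := by
  rw [softThreshold, if_pos (lt_abs.mpr (Or.inr (by linarith))), Real.sign_of_neg (by linarith)]
  ring

lemma softThreshold_of_abs_le {a c : ℝ} (h : |a| ≤ c) : softThreshold a c = 0 := by
  rw [softThreshold, if_neg h.not_gt]

lemma softThreshold_eq_iff_of_ne_zero {a b c : ℝ} (hc : 0 ≤ c) (hb : b ≠ 0) :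
    softThreshold a c = b ↔ a = b + c * Real.sign b := by
  have hsign : Real.sign b = -1 ∧ b < 0 ∨ Real.sign b = 1 ∧ 0 < b := by
    rcases hb.lt_or_gt with hb | hb
    exacts [.inl ⟨Real.sign_of_neg hb, hb⟩, .inr ⟨Real.sign_of_pos hb, hb⟩]
  rcases lt_or_ge c a with ha | ha
  · rw [softThreshold_of_lt hc ha]
    rcases hsign with ⟨hs, hb⟩ | ⟨hs, hb⟩ <;> rw [hs] <;> constructor <;> intro <;> linarith
  rcases lt_or_ge a (-c) with ha' | ha'
  · rw [softThreshold_of_lt_neg hc ha']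
    rcases hsign with ⟨hs, hb⟩ | ⟨hs, hb⟩ <;> rw [hs] <;> constructor <;> intro <;> linarith
  · rw [softThreshold_of_abs_le (abs_le.mpr ⟨ha', ha⟩)]
    rcases hsign with ⟨hs, hb⟩ | ⟨hs, hb⟩ <;> rw [hs] <;> constructor <;> intro <;> linarith

lemma abs_mul_div_add_abs_eq_self_iff_of_ne_zero {a b c : ℝ} (hc : 0 ≤ c) (hb : b ≠ 0) :
    |b| * a / (c + |b|) = b ↔ a = b + c * Real.sign b := by
  rw [div_eq_iff (by positivity)]
  rcases hb.lt_or_gt with hb | hb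
  · rw [abs_of_neg hb, Real.sign_of_neg hb]
    constructor <;> intro h
    · linarith [mul_left_cancel₀ hb.ne (show b * a = b * (b - c) by linarith)]
    · rw [h]; ring
  · rw [abs_of_pos hb, Real.sign_of_pos hb]
    constructor <;> intro h
    · linarith [mul_left_cancel₀ hb.ne' (show b * a = b * (b + c) by linarith)]
    · rw [h]; ring

lemma abs_mul_div_add_abs_eq_self_iff {a b c : ℝ} (hc : 0 ≤ c) :
    |b| * a / (c + |b|) = b ↔ b = 0 ∨ b = softThreshold a c := by
  rcases eq_or_ne b 0 with rfl | hb
  · simp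
  rw [abs_mul_div_add_abs_eq_self_iff_of_ne_zero hc hb, or_iff_right hb,
    eq_comm (b := softThreshold a c), softThreshold_eq_iff_of_ne_zero hc hb]

theorem slog_one_dim_fixed_points_general (lam : ℝ) (hlam : 0 < lam) (n : ℕ)
    (βhat : ℝ) :
    ∀ b : ℝ, |b| * βhat / (lam / n + |b|) = b ↔
      (b = 0 ∨ b = softThreshold βhat (lam / n)) := fun _ =>
  abs_mul_div_add_abs_eq_self_iff (div_nonneg hlam.le n.cast_nonneg)

theorem slog_one_dim_fixed_points (lam : ℝ) (hlam : 0 < lam) (n : ℕ) (hn : 1 ≤ n)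
    (βhat : ℝ) :
    ∀ b : ℝ, |b| * βhat / (lam / n + |b|) = b ↔
      (b = 0 ∨ b = softThreshold βhat (lam / n)) :=
  slog_one_dim_fixed_points_general lam hlam n βhat
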